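/- arXiv:math/0005082 — 6 statements merged into one kernel-verified Lean document; each statement's English description precedes it below -/
import Mathlib

section
/- For any w, z in the resolvent set of A, the operators G(z) := C_H^{-1}∘Ğ(z*)′ (where C_H is the canonical conjugate-linear isomorphism H → H′ and ′ denotes the Banach adjoint) satisfy (z-w)·(-A+w)^{-1}∘G(z) = G(w) - G(z); in particular the range of G(w) - G(z) is contained in D(A). -/
open scoped ComplexConjugate InnerProductSpace

/-- `G(z) := C_H⁻¹ ∘ Ğ(z*)′ : X′ → H`, where `Ğ(z) = τ ∘ R(z)`, `′` is the Banach adjoint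
(`ℓ ↦ ℓ ∘ Ğ(z*)`) and `C_H` is the canonical conjugate-linear isomorphism `H ≅ H′`. -/
noncomputable def Gop
    {H : Type*} [NormedAddCommGroup H] [InnerProductSpace ℂ H] [CompleteSpace H]
    {D : Type*} [NormedAddCommGroup D] [NormedSpace ℂ D]
    {X : Type*} [NormedAddCommGroup X] [NormedSpace ℂ X]
    (R : ℂ → (H →L[ℂ] D)) (τ : D →L[ℂ] X) (z : ℂ) (ℓ : X →L[ℂ] ℂ) : H :=
  (InnerProductSpace.toDual ℂ H).symm (ℓ.comp (τ.comp (R (conj z))))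

/-- For `w, z` in the resolvent set of the self-adjoint `A`, the
(bounded conjugate-linear) operators `G(z) = C_H⁻¹ ∘ Ğ(z*)′` satisfy
`(z - w) • R(w) ∘ G(z) = G(w) - G(z)`; in particular `Range (G(w) - G(z)) ⊆ D(A)`. -/
theorem stmt1
    {H : Type*} [NormedAddCommGroup H] [InnerProductSpace ℂ H] [CompleteSpace H]
    {D : Type*} [NormedAddCommGroup D] [NormedSpace ℂ D]
    {X : Type*} [NormedAddCommGroup X] [NormedSpace ℂ X]
    (ρ : Set ℂ) (R : ℂ → (H →L[ℂ] D)) (ι : D →L[ℂ] H) (τ : D →L[ℂ] X)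
    (hρ : ∀ z ∈ ρ, conj z ∈ ρ)
    (hres : ∀ z ∈ ρ, ∀ w ∈ ρ,
      (z - w) • ((R w).comp (ι.comp (R z))) = R w - R z)
    (hadj : ∀ z ∈ ρ,
      ContinuousLinearMap.adjoint (ι.comp (R z)) = ι.comp (R (conj z)))
    {z w : ℂ} (hz : z ∈ ρ) (hw : w ∈ ρ) :
    ∀ ℓ : X →L[ℂ] ℂ,
      (z - w) • ι (R w (Gop R τ z ℓ)) = Gop R τ w ℓ - Gop R τ z ℓ ∧
      ∃ d : D, ι d = Gop R τ w ℓ - Gop R τ z ℓ := by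
  intro ℓ
  have key : (z - w) • ι (R w (Gop R τ z ℓ)) = Gop R τ w ℓ - Gop R τ z ℓ := by
    apply ext_inner_right ℂ
    intro x
    have h1 : ⟪ι (R w (Gop R τ z ℓ)), x⟫_ℂ
        = ⟪Gop R τ z ℓ, ι (R (conj w) x)⟫_ℂ := by
      have := ContinuousLinearMap.adjoint_inner_right (𝕜 := ℂ)
        (ι.comp (R w)) (Gop R τ z ℓ) x
      rw [hadj w hw] at this
      simpa using this.symm
    rw [inner_smul_left, h1]
    have h2 : ∀ ζ : ℂ, ∀ y : H, ⟪Gop R τ ζ ℓ, y⟫_ℂ = ℓ (τ (R (conj ζ) y)) := by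
      intro ζ y
      simp [Gop, InnerProductSpace.toDual_symm_apply]
    rw [h2]
    have h3 := congrArg (fun T : H →L[ℂ] D => ℓ (τ (T x)))
      (hres (conj w) (hρ w hw) (conj z) (hρ z hz))
    simp only [ContinuousLinearMap.smul_apply, ContinuousLinearMap.comp_apply,
      ContinuousLinearMap.sub_apply, map_smul, map_sub, smul_eq_mul] at h3
    have hc : conj (z - w) = conj z - conj w := by
      simp [map_sub]
    rw [hc]
    have h3' : (conj w - conj z) * ℓ (τ (R (conj z) (ι (R (conj w) x))))
        = ℓ (τ (R (conj z) x)) - ℓ (τ (R (conj w) x)) := h3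
    have h4 : (conj z - conj w) * ℓ (τ (R (conj z) (ι (R (conj w) x))))
        = ℓ (τ (R (conj w) x)) - ℓ (τ (R (conj z) x)) := by
      have : (conj z - conj w) = -(conj w - conj z) := by ring
      rw [this, neg_mul, h3']; ring
    rw [h4, inner_sub_left, h2, h2]
  exact ⟨key, ⟨(z - w) • R w (Gop R τ z ℓ), by rw [map_smul, key]⟩⟩
end

section
/- If the bounded linear operator τ : D(A) → X has dense range, then for every z ∈ ρ(A) the operator Ğ(z) = τ∘(-A+z)^{-1} has dense range in X and G(z) = C_H^{-1}∘Ğ(z*)′ is injective. -/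
open scoped ComplexConjugate

namespace ContinuousLinearMap

variable {𝕜 E F G : Type*} [NontriviallyNormedField 𝕜]
    [NormedAddCommGroup E] [NormedSpace 𝕜 E] [NormedAddCommGroup F] [NormedSpace 𝕜 F]
    [NormedAddCommGroup G] [NormedSpace 𝕜 G]

theorem denseRange_comp_of_surjective
    {T : F →L[𝕜] G} {S : E →L[𝕜] F} (hT : DenseRange T) (hS : Function.Surjective S) :
    DenseRange (T.comp S) :=
  hT.comp hS.denseRange T.continuous

theorem comp_right_injective_of_denseRange
    {T : E →L[𝕜] F} (hT : DenseRange T) :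
    Function.Injective (fun ℓ : F →L[𝕜] G => ℓ.comp T) := fun ℓ₁ ℓ₂ h =>
  DFunLike.coe_injective <|
    hT.equalizer ℓ₁.continuous ℓ₂.continuous (congrArg DFunLike.coe h)

end ContinuousLinearMap

theorem stmt2_general
    {H : Type*} [NormedAddCommGroup H] [InnerProductSpace ℂ H] [CompleteSpace H]
    {D : Type*} [NormedAddCommGroup D] [NormedSpace ℂ D]
    {X : Type*} [NormedAddCommGroup X] [NormedSpace ℂ X]
    (ρ : Set ℂ) (R : ℂ → (H →L[ℂ] D)) (τ : D →L[ℂ] X)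
    (hρ : ∀ z ∈ ρ, conj z ∈ ρ)
    (hsurj : ∀ z ∈ ρ, Function.Surjective (R z))
    (hτ : DenseRange τ)
    {z : ℂ} (hz : z ∈ ρ) :
    DenseRange (τ.comp (R z)) ∧
    Function.Injective (fun ℓ : X →L[ℂ] ℂ => Gop R τ z ℓ) := by
  have hdense : ∀ w ∈ ρ, DenseRange (τ.comp (R w)) := fun w hw =>
    ContinuousLinearMap.denseRange_comp_of_surjective hτ (hsurj w hw)
  exact ⟨hdense z hz, (InnerProductSpace.toDual ℂ H).symm.injective.comp
    (ContinuousLinearMap.comp_right_injective_of_denseRange (hdense _ (hρ z hz)))⟩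

/-- If `τ : D(A) → X` has dense range then, for every `z` in the
resolvent set, `Ğ(z) = τ ∘ R(z)` has dense range and `G(z) = C_H⁻¹ ∘ Ğ(z*)′` is
injective.  (Recall that the resolvent `R(z) : H → D(A)` is surjective.) -/
theorem stmt2
    {H : Type*} [NormedAddCommGroup H] [InnerProductSpace ℂ H] [CompleteSpace H]
    {D : Type*} [NormedAddCommGroup D] [NormedSpace ℂ D]
    {X : Type*} [NormedAddCommGroup X] [NormedSpace ℂ X]
    (ρ : Set ℂ) (R : ℂ → (H →L[ℂ] D)) (ι : D →L[ℂ] H) (τ : D →L[ℂ] X)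
    (hρ : ∀ z ∈ ρ, conj z ∈ ρ)
    (hsurj : ∀ z ∈ ρ, Function.Surjective (R z))
    (hτ : DenseRange τ)
    {z : ℂ} (hz : z ∈ ρ) :
    DenseRange (τ.comp (R z)) ∧
    Function.Injective (fun ℓ : X →L[ℂ] ℂ => Gop R τ z ℓ) :=
  stmt2_general ρ R τ hρ hsurj hτ hz
end

section
/- Suppose Γ satisfies Γ(z) − Γ(w) = (z−w)·Ğ(w)∘G(z) and the symmetry ℓ₁(Γ(z*)ℓ₂) = (ℓ₂(Γ(z)ℓ₁))*. Then Im(ℓ(Γ(z)ℓ)) = Im(z)·‖G(z)ℓ‖²_H for every ℓ in the domain of Γ(z). -/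
open scoped ComplexConjugate

/-- Suppose `Γ` satisfies `Γ(z) − Γ(w) = (z − w) • Ğ(w)∘G(z)` on its
(z-independent) domain `DΓ` and the symmetry `ℓ₁(Γ(z*)ℓ₂) = (ℓ₂(Γ(z)ℓ₁))*`. Then
`Im (ℓ(Γ(z)ℓ)) = Im z · ‖G(z)ℓ‖²` for every `ℓ ∈ DΓ`. -/
theorem stmt7
    {H : Type*} [NormedAddCommGroup H] [InnerProductSpace ℂ H] [CompleteSpace H]
    {D : Type*} [NormedAddCommGroup D] [NormedSpace ℂ D]
    {X : Type*} [NormedAddCommGroup X] [NormedSpace ℂ X]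
    (ρ : Set ℂ) (R : ℂ → (H →L[ℂ] D)) (ι : D →L[ℂ] H) (τ : D →L[ℂ] X)
    (hρ : ∀ z ∈ ρ, conj z ∈ ρ)
    (hres : ∀ z ∈ ρ, ∀ w ∈ ρ,
      (z - w) • ((R w).comp (ι.comp (R z))) = R w - R z)
    (hadj : ∀ z ∈ ρ,
      ContinuousLinearMap.adjoint (ι.comp (R z)) = ι.comp (R (conj z)))
    (DΓ : Set (X →L[ℂ] ℂ)) (Γ : ℂ → (X →L[ℂ] ℂ) → X)
    (hrel : ∀ z ∈ ρ, ∀ w ∈ ρ, ∀ ℓ ∈ DΓ,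
      Γ z ℓ - Γ w ℓ = (z - w) • τ (R w (Gop R τ z ℓ)))
    (hsymm : ∀ z ∈ ρ, ∀ ℓ₁ ∈ DΓ, ∀ ℓ₂ ∈ DΓ,
      ℓ₁ (Γ (conj z) ℓ₂) = conj (ℓ₂ (Γ z ℓ₁)))
    {z : ℂ} (hz : z ∈ ρ) :
    ∀ ℓ ∈ DΓ, (ℓ (Γ z ℓ)).im = z.im * ‖Gop R τ z ℓ‖ ^ 2 := by
  intro ℓ hℓ
  set h := Gop R τ z ℓ with hh
  have hG : ℓ (τ (R (conj z) h)) = (‖h‖ ^ 2 : ℝ) := by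
    have : (ℓ.comp (τ.comp (R (conj z)))) h
        = (InnerProductSpace.toDual ℂ H) h h := by
      rw [hh, Gop, LinearIsometryEquiv.apply_symm_apply]
    simpa [InnerProductSpace.toDual_apply_apply, inner_self_eq_norm_sq_to_K] using this
  have hsy := hsymm z hz ℓ hℓ ℓ hℓ
  have hr := hrel z hz (conj z) (hρ z hz) ℓ hℓ
  have key : ℓ (Γ z ℓ) - conj (ℓ (Γ z ℓ))
      = (z - conj z) * (‖h‖ ^ 2 : ℝ) := by
    rw [← hsy, ← hG, ← map_sub, hr, map_smul, smul_eq_mul]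
  have := congrArg Complex.im key
  simp [Complex.sub_im, Complex.conj_im, Complex.mul_im, Complex.ofReal_im,
    Complex.ofReal_re, ← Complex.ofReal_pow] at this
  linarith
end

section
/- Under the symmetry hypothesis ℓ₁(Γ(z*)ℓ₂) = (ℓ₂(Γ(z)ℓ₁))* and with Θ a symmetric operator from X′ to X (i.e. ℓ₁(Θℓ₂) = (ℓ₂(Θℓ₁))*), one has |ℓ(Γ_Θ(z)ℓ)|² = (ℓ(Θℓ) + Re ℓ(Γ(z)ℓ))² + (Im z)²·‖G(z)ℓ‖⁴_H, where Γ_Θ(z) := Θ + Γ(z). -/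
open scoped ComplexConjugate

/-!
Write `a = ℓ(Θℓ)` and `b = ℓ(Γ(z)ℓ)`. Symmetry of `Θ` makes `a` real. Evaluating the resolvent
relation `Γ(z)ℓ - Γ(z*)ℓ = (z - z*) Ğ(z*) G(z)ℓ` on `ℓ`, the symmetry of `Γ` turns the left side
into `b - b*`, and by the definition of `G(z)` through the Riesz map the right side is
`(z - z*) ‖G(z)ℓ‖²`. Hence `Im b = Im z ‖G(z)ℓ‖²`, and `|a + b|² = (a + Re b)² + (Im b)²`.
-/

theorem Complex.im_eq_of_sub_conj_eq {b z : ℂ} {r : ℝ} (h : b - conj b = (z - conj z) * r) :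
    b.im = z.im * r := by
  have h' := congrArg Complex.im h
  simp only [Complex.sub_conj, Complex.mul_im, Complex.ofReal_re, Complex.ofReal_im,
    Complex.I_re, Complex.I_im, Complex.mul_re] at h'
  linarith

section Gop

variable {H : Type*} [NormedAddCommGroup H] [InnerProductSpace ℂ H] [CompleteSpace H]
  {D : Type*} [NormedAddCommGroup D] [NormedSpace ℂ D]
  {X : Type*} [NormedAddCommGroup X] [NormedSpace ℂ X]

theorem apply_resolvent_Gop_eq_norm_sq (R : ℂ → (H →L[ℂ] D)) (τ : D →L[ℂ] X) (z : ℂ)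
    (ℓ : X →L[ℂ] ℂ) :
    ℓ (τ (R (conj z) (Gop R τ z ℓ))) = ((‖Gop R τ z ℓ‖ ^ 2 : ℝ) : ℂ) := by
  calc ℓ (τ (R (conj z) (Gop R τ z ℓ))) = inner ℂ (Gop R τ z ℓ) (Gop R τ z ℓ) :=
        (InnerProductSpace.toDual_symm_apply (x := Gop R τ z ℓ)
          (y := ℓ.comp (τ.comp (R (conj z))))).symm
    _ = _ := by rw [inner_self_eq_norm_sq_to_K]; norm_cast

theorem im_apply_Γ_self (ρ : Set ℂ) (R : ℂ → (H →L[ℂ] D)) (τ : D →L[ℂ] X)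
    (hρ : ∀ z ∈ ρ, conj z ∈ ρ) (DΓ : Set (X →L[ℂ] ℂ)) (Γ : ℂ → (X →L[ℂ] ℂ) → X)
    (hrel : ∀ z ∈ ρ, ∀ w ∈ ρ, ∀ ℓ ∈ DΓ,
      Γ z ℓ - Γ w ℓ = (z - w) • τ (R w (Gop R τ z ℓ)))
    (hsymm : ∀ z ∈ ρ, ∀ ℓ₁ ∈ DΓ, ∀ ℓ₂ ∈ DΓ,
      ℓ₁ (Γ (conj z) ℓ₂) = conj (ℓ₂ (Γ z ℓ₁)))
    {z : ℂ} (hz : z ∈ ρ) {ℓ : X →L[ℂ] ℂ} (hℓ : ℓ ∈ DΓ) :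
    (ℓ (Γ z ℓ)).im = z.im * ‖Gop R τ z ℓ‖ ^ 2 := by
  apply Complex.im_eq_of_sub_conj_eq
  calc ℓ (Γ z ℓ) - conj (ℓ (Γ z ℓ))
      = ℓ (Γ z ℓ - Γ (conj z) ℓ) := by rw [map_sub, hsymm z hz ℓ hℓ ℓ hℓ]
    _ = (z - conj z) * ((‖Gop R τ z ℓ‖ ^ 2 : ℝ) : ℂ) := by
      rw [hrel z hz (conj z) (hρ z hz) ℓ hℓ, map_smul, smul_eq_mul,
        apply_resolvent_Gop_eq_norm_sq]

end Gop

theorem stmt8_general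
    {H : Type*} [NormedAddCommGroup H] [InnerProductSpace ℂ H] [CompleteSpace H]
    {D : Type*} [NormedAddCommGroup D] [NormedSpace ℂ D]
    {X : Type*} [NormedAddCommGroup X] [NormedSpace ℂ X]
    (ρ : Set ℂ) (R : ℂ → (H →L[ℂ] D)) (τ : D →L[ℂ] X)
    (hρ : ∀ z ∈ ρ, conj z ∈ ρ)
    (DΓ : Set (X →L[ℂ] ℂ)) (Γ : ℂ → (X →L[ℂ] ℂ) → X)
    (hrel : ∀ z ∈ ρ, ∀ w ∈ ρ, ∀ ℓ ∈ DΓ,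
      Γ z ℓ - Γ w ℓ = (z - w) • τ (R w (Gop R τ z ℓ)))
    (hsymm : ∀ z ∈ ρ, ∀ ℓ₁ ∈ DΓ, ∀ ℓ₂ ∈ DΓ,
      ℓ₁ (Γ (conj z) ℓ₂) = conj (ℓ₂ (Γ z ℓ₁)))
    (DΘ : Set (X →L[ℂ] ℂ)) (Θ : (X →L[ℂ] ℂ) → X)
    (hΘsymm : ∀ ℓ₁ ∈ DΘ, ∀ ℓ₂ ∈ DΘ, ℓ₁ (Θ ℓ₂) = conj (ℓ₂ (Θ ℓ₁)))
    {z : ℂ} (hz : z ∈ ρ) :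
    ∀ ℓ, ℓ ∈ DΘ → ℓ ∈ DΓ →
      ‖ℓ (Θ ℓ + Γ z ℓ)‖ ^ 2
        = ((ℓ (Θ ℓ)).re + (ℓ (Γ z ℓ)).re) ^ 2 + z.im ^ 2 * ‖Gop R τ z ℓ‖ ^ 4 := by
  intro ℓ hℓΘ hℓΓ
  have hΘ_real : (ℓ (Θ ℓ)).im = 0 := Complex.conj_eq_iff_im.mp (hΘsymm ℓ hℓΘ ℓ hℓΘ).symm
  have hΓ_im := im_apply_Γ_self ρ R τ hρ DΓ Γ hrel hsymm hz hℓΓ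
  rw [map_add, Complex.sq_norm, Complex.normSq_apply, Complex.add_re, Complex.add_im, hΘ_real,
    hΓ_im]
  ring

/-- Under the symmetry `ℓ₁(Γ(z*)ℓ₂) = (ℓ₂(Γ(z)ℓ₁))*` and with `Θ`
a symmetric operator from `X′` to `X` (`ℓ₁(Θℓ₂) = (ℓ₂(Θℓ₁))*`), one has, for
`Γ_Θ(z) := Θ + Γ(z)` and `ℓ ∈ D(Θ) ∩ D(Γ)`,
`|ℓ(Γ_Θ(z)ℓ)|² = (ℓ(Θℓ) + Re ℓ(Γ(z)ℓ))² + (Im z)² ‖G(z)ℓ‖⁴`. -/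
theorem stmt8
    {H : Type*} [NormedAddCommGroup H] [InnerProductSpace ℂ H] [CompleteSpace H]
    {D : Type*} [NormedAddCommGroup D] [NormedSpace ℂ D]
    {X : Type*} [NormedAddCommGroup X] [NormedSpace ℂ X]
    (ρ : Set ℂ) (R : ℂ → (H →L[ℂ] D)) (ι : D →L[ℂ] H) (τ : D →L[ℂ] X)
    (hρ : ∀ z ∈ ρ, conj z ∈ ρ)
    (hres : ∀ z ∈ ρ, ∀ w ∈ ρ,
      (z - w) • ((R w).comp (ι.comp (R z))) = R w - R z)
    (hadj : ∀ z ∈ ρ,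
      ContinuousLinearMap.adjoint (ι.comp (R z)) = ι.comp (R (conj z)))
    (DΓ : Set (X →L[ℂ] ℂ)) (Γ : ℂ → (X →L[ℂ] ℂ) → X)
    (hrel : ∀ z ∈ ρ, ∀ w ∈ ρ, ∀ ℓ ∈ DΓ,
      Γ z ℓ - Γ w ℓ = (z - w) • τ (R w (Gop R τ z ℓ)))
    (hsymm : ∀ z ∈ ρ, ∀ ℓ₁ ∈ DΓ, ∀ ℓ₂ ∈ DΓ,
      ℓ₁ (Γ (conj z) ℓ₂) = conj (ℓ₂ (Γ z ℓ₁)))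
    (DΘ : Set (X →L[ℂ] ℂ)) (Θ : (X →L[ℂ] ℂ) → X)
    (hΘsymm : ∀ ℓ₁ ∈ DΘ, ∀ ℓ₂ ∈ DΘ, ℓ₁ (Θ ℓ₂) = conj (ℓ₂ (Θ ℓ₁)))
    {z : ℂ} (hz : z ∈ ρ) :
    ∀ ℓ, ℓ ∈ DΘ → ℓ ∈ DΓ →
      ‖ℓ (Θ ℓ + Γ z ℓ)‖ ^ 2
        = ((ℓ (Θ ℓ)).re + (ℓ (Γ z ℓ)).re) ^ 2 + z.im ^ 2 * ‖Gop R τ z ℓ‖ ^ 4 :=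
  stmt8_general ρ R τ hρ DΓ Γ hrel hsymm DΘ Θ hΘsymm hz
end

section
/- Condition (h2), Range τ′ ∩ H′ = {0}, is equivalent to Range G(z) ∩ D(A) = {0} for every z ∈ ρ(A). -/
open scoped ComplexConjugate InnerProductSpace

/-- **Remark 2.5.** Condition (h2), `Range τ′ ∩ H′ = {0}` (i.e. if
`ℓ ∘ τ = ⟪φ, ι ·⟫` then `φ = 0`), is equivalent to
`Range G(z) ∩ D(A) = {0}` for every `z ∈ ρ(A)`. -/
theorem stmt12
    {H : Type*} [NormedAddCommGroup H] [InnerProductSpace ℂ H] [CompleteSpace H]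
    {D : Type*} [NormedAddCommGroup D] [NormedSpace ℂ D]
    {X : Type*} [NormedAddCommGroup X] [NormedSpace ℂ X]
    (ρ : Set ℂ) (R : ℂ → (H →L[ℂ] D)) (ι : D →L[ℂ] H) (τ : D →L[ℂ] X)
    (hne : ρ.Nonempty)
    (hιinj : Function.Injective ι) (hιdense : DenseRange ι)
    (hρ : ∀ z ∈ ρ, conj z ∈ ρ)
    (hres : ∀ z ∈ ρ, ∀ w ∈ ρ,
      (z - w) • ((R w).comp (ι.comp (R z))) = R w - R z)
    (hadj : ∀ z ∈ ρ,
      ContinuousLinearMap.adjoint (ι.comp (R z)) = ι.comp (R (conj z)))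
    (hRinj : ∀ z ∈ ρ, Function.Injective (R z))
    (hRsurj : ∀ z ∈ ρ, Function.Surjective (R z)) :
    (∀ (ℓ : X →L[ℂ] ℂ) (φ : H), (∀ d : D, ℓ (τ d) = ⟪φ, ι d⟫_ℂ) → φ = 0) ↔
    (∀ z ∈ ρ, ∀ (ℓ : X →L[ℂ] ℂ) (d : D), Gop R τ z ℓ = ι d → Gop R τ z ℓ = 0) := by
  have key : ∀ z ∈ ρ, ∀ (ℓ : X →L[ℂ] ℂ) (h : H),
      ⟪Gop R τ z ℓ, h⟫_ℂ = ℓ (τ (R (conj z) h)) := by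
    intro z hz ℓ h
    simpa [Gop] using InnerProductSpace.toDual_symm_apply
      (y := ℓ.comp (τ.comp (R (conj z)))) (x := h)
  have key2 : ∀ z ∈ ρ, ∀ (φ : H) (h : H),
      ⟪φ, ι (R (conj z) h)⟫_ℂ = ⟪ι (R z φ), h⟫_ℂ := by
    intro z hz φ h
    have := ContinuousLinearMap.adjoint_inner_right (ι.comp (R z)) φ h
    rw [hadj z hz] at this
    simpa using this
  constructor
  · intro h2 z hz ℓ d hd
    obtain ⟨φ, hφ⟩ := hRsurj z hz d
    have hιφ : Gop R τ z ℓ = ι (R z φ) := by rw [hd, hφ]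
    have hkey : ∀ e : D, ℓ (τ e) = ⟪φ, ι e⟫_ℂ := by
      intro e
      obtain ⟨h, rfl⟩ := hRsurj (conj z) (hρ z hz) e
      rw [← key z hz ℓ h, key2 z hz φ h, hιφ]
    have hφ0 := h2 ℓ φ hkey
    rw [hιφ, hφ0]
    simp
  · intro hG ℓ φ hφ
    obtain ⟨z, hz⟩ := hne
    have hG' : Gop R τ z ℓ = ι (R z φ) := by
      apply ext_inner_right ℂ
      intro h
      rw [key z hz ℓ h, ← key2 z hz φ h, hφ]
    have h0 := hG z hz ℓ (R z φ) hG'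
    rw [hG'] at h0
    have := hιinj (h0.trans (map_zero ι).symm)
    exact hRinj z hz (this.trans (map_zero (R z)).symm)
end

section
/- For z ∈ ℂ∖(−∞,0] with Re√z > 0 and a > 0, one has (1/(2π²a))·∫₀^∞ r·sin(ra)/(r²+z)² dr = e^{−√z a}/(8π√z). In particular d/dz (−e^{−√z a}/(4πa)) = e^{−√z a}/(8π√z). -/
/-!
With `s = √z`, `Re s > 0`, the Fourier transform of `t ↦ exp (-s |t|)` is
`ξ ↦ 2s / (s² + (2πξ)²)`. Fourier inversion at `a`, together with evenness, gives
`∫₀^∞ cos (r a) / (r² + s²) dr = π e^{-s|a|} / (2s)`. Integrating the derivative of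
`r ↦ sin (r a) / (r² + s²)` over `(0, ∞)` shows that twice the integral of
`r sin (r a) / (r² + s²)²` is `a` times the cosine integral, so it equals `π a e^{-s|a|} / (4s)`.
-/

open MeasureTheory Real

open Set Filter Topology FourierTransform
open scoped Complex
open Complex (I slitPlane)

lemma sq_mem_slitPlane_of_re_pos {s : ℂ} (hs : 0 < s.re) : s ^ 2 ∈ slitPlane := by
  rw [Complex.mem_slitPlane_iff, sq, Complex.mul_re, Complex.mul_im]
  by_cases h : s.im = 0
  · left
    simpa [h] using mul_pos hs hs
  · right
    exact fun h' => h (by nlinarith [mul_self_nonneg s.im])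

lemma exists_mul_one_add_le_norm_add {z : ℂ} (hz : z ∈ slitPlane) :
    ∃ c > 0, ∀ x : ℝ, 0 ≤ x → c * (1 + x) ≤ ‖(x : ℂ) + z‖ := by
  -- `(x + z) / (1 + x)` runs over the segment from `1` to `z`, a compact subset of the slit plane.
  have hpath : ∀ t ∈ Icc (0 : ℝ) 1, 1 + t • (z - 1) ∈ slitPlane := fun t ht =>
    Complex.starConvex_one_slitPlane.add_smul_mem (by simpa using hz) ht.1 ht.2
  obtain ⟨t₀, ht₀, hmin⟩ := isCompact_Icc.exists_isMinOn (nonempty_Icc.2 zero_le_one)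
    (f := fun t : ℝ => ‖1 + t • (z - 1)‖) (by fun_prop)
  refine ⟨_, norm_pos_iff.2 (Complex.slitPlane_ne_zero (hpath t₀ ht₀)), fun x hx => ?_⟩
  have h1x : (0 : ℝ) < 1 + x := by positivity
  have hmem : (1 + x)⁻¹ ∈ Icc (0 : ℝ) 1 := ⟨by positivity, inv_le_one_of_one_le₀ (by linarith)⟩
  have hpt : 1 + (1 + x)⁻¹ • (z - 1) = ((1 + x)⁻¹ : ℝ) • ((x : ℂ) + z) := by
    have : (1 + x : ℂ) ≠ 0 := by exact_mod_cast h1x.ne'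
    simp only [Complex.real_smul]
    push_cast
    field_simp
    ring
  have := hmin hmem
  simp only [mem_ofPred_eq, hpt, norm_smul, norm_inv, Real.norm_eq_abs, abs_of_pos h1x] at this
  rw [mul_comm]
  exact (le_inv_mul_iff₀ h1x).1 this

lemma integral_eq_integral_Ioi_add_comp_neg {E : Type*} [NormedAddCommGroup E]
    [NormedSpace ℝ E] {f : ℝ → E} (hf : Integrable f) :
    ∫ x, f x = ∫ x in Ioi 0, (f x + f (-x)) := by
  rw [integral_add hf.integrableOn hf.comp_neg.integrableOn, integral_comp_neg_Ioi, neg_zero,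
    add_comm, intervalIntegral.integral_Iic_add_Ioi hf.integrableOn hf.integrableOn]

section

variable {s : ℂ}

lemma exists_mul_one_add_sq_le_norm_sq_add_sq (hs : 0 < s.re) :
    ∃ c > 0, ∀ r : ℝ, c * (1 + r ^ 2) ≤ ‖(r : ℂ) ^ 2 + s ^ 2‖ := by
  obtain ⟨c, hc, h⟩ := exists_mul_one_add_le_norm_add (sq_mem_slitPlane_of_re_pos hs)
  exact ⟨c, hc, fun r => by exact_mod_cast h (r ^ 2) (sq_nonneg r)⟩

lemma sq_add_sq_ne_zero (hs : 0 < s.re) (r : ℝ) : (r : ℂ) ^ 2 + s ^ 2 ≠ 0 := by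
  obtain ⟨c, hc, h⟩ := exists_mul_one_add_sq_le_norm_sq_add_sq hs
  exact norm_pos_iff.1 ((by positivity : 0 < c * (1 + r ^ 2)).trans_le (h r))

lemma integrable_inv_sq_add_sq (hs : 0 < s.re) :
    Integrable fun r : ℝ => ((r : ℂ) ^ 2 + s ^ 2)⁻¹ := by
  obtain ⟨c, hc, hle⟩ := exists_mul_one_add_sq_le_norm_sq_add_sq hs
  refine (integrable_inv_one_add_sq.const_mul c⁻¹).mono'
    ((Continuous.inv₀ (by fun_prop) (sq_add_sq_ne_zero hs)).aestronglyMeasurable)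
    (ae_of_all _ fun r => ?_)
  rw [norm_inv, ← mul_inv]
  exact inv_anti₀ (by positivity) (hle r)

lemma integrable_div_sq_add_sq_of_norm_le_one (hs : 0 < s.re) {f : ℝ → ℂ} (hf : Continuous f)
    (hbdd : ∀ r, ‖f r‖ ≤ 1) : Integrable fun r : ℝ => f r / ((r : ℂ) ^ 2 + s ^ 2) := by
  simpa only [div_eq_mul_inv] using
    (integrable_inv_sq_add_sq hs).bdd_mul hf.aestronglyMeasurable (ae_of_all _ hbdd)

lemma integrable_mul_sin_div_sq_add_sq_sq (hs : 0 < s.re) (a : ℝ) :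
    Integrable fun r : ℝ => (r : ℂ) * (sin (r * a) : ℂ) / ((r : ℂ) ^ 2 + s ^ 2) ^ 2 := by
  obtain ⟨c, hc, hle⟩ := exists_mul_one_add_sq_le_norm_sq_add_sq hs
  refine (integrable_inv_one_add_sq.const_mul (c ^ 2)⁻¹).mono'
    ((by fun_prop : Continuous fun r : ℝ => (r : ℂ) * (sin (r * a) : ℂ)).div (by fun_prop)
      fun r => pow_ne_zero 2 (sq_add_sq_ne_zero hs r)).aestronglyMeasurable
    (ae_of_all _ fun r => ?_)
  have h1 : (0 : ℝ) < 1 + r ^ 2 := by positivity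
  have hD : 0 < ‖(r : ℂ) ^ 2 + s ^ 2‖ := norm_pos_iff.2 (sq_add_sq_ne_zero hs r)
  rw [norm_div, norm_pow, norm_mul, Complex.norm_real, Complex.norm_real, Real.norm_eq_abs,
    Real.norm_eq_abs, div_le_iff₀ (by positivity)]
  calc |r| * |sin (r * a)| ≤ 1 + r ^ 2 := by
        nlinarith [abs_sin_le_one (r * a), abs_nonneg r, abs_nonneg (sin (r * a)), sq_abs r,
          sq_nonneg (|r| - 1)]
    _ = (c ^ 2)⁻¹ * (1 + r ^ 2)⁻¹ * (c * (1 + r ^ 2)) ^ 2 := by field_simp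
    _ ≤ (c ^ 2)⁻¹ * (1 + r ^ 2)⁻¹ * ‖(r : ℂ) ^ 2 + s ^ 2‖ ^ 2 := by
        gcongr
        exact hle r

lemma integrable_exp_neg_mul_abs (hs : 0 < s.re) :
    Integrable fun t : ℝ => cexp (-s * |t|) := by
  rw [← integrableOn_univ, ← Iic_union_Ioi (a := 0)]
  refine IntegrableOn.union ?_ ?_
  · refine (integrableOn_exp_mul_complex_Iic (a := s) hs 0).congr_fun (fun t ht => ?_)
      measurableSet_Iic
    rw [abs_of_nonpos ht, Complex.ofReal_neg, neg_mul_neg]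
  · refine (integrableOn_exp_mul_complex_Ioi (a := -s) (by simpa using hs) 0).congr_fun
      (fun t ht => ?_) measurableSet_Ioi
    rw [abs_of_pos ht]

lemma fourier_exp_neg_mul_abs (hs : 0 < s.re) (ξ : ℝ) :
    𝓕 (fun t : ℝ => cexp (-s * |t|)) ξ = 2 * s / (s ^ 2 + (2 * π * ξ) ^ 2) := by
  have hle : ∀ t ∈ Iic (0 : ℝ), cexp (↑(-2 * π * t * ξ) * I) • cexp (-s * |t|)
      = cexp ((s - 2 * π * ξ * I) * t) := fun t ht => by
    rw [abs_of_nonpos ht, smul_eq_mul, ← Complex.exp_add]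
    congr 1
    push_cast
    ring
  have hgt : ∀ t ∈ Ioi (0 : ℝ), cexp (↑(-2 * π * t * ξ) * I) • cexp (-s * |t|)
      = cexp ((-s - 2 * π * ξ * I) * t) := fun t ht => by
    rw [abs_of_pos ht, smul_eq_mul, ← Complex.exp_add]
    congr 1
    push_cast
    ring
  have hre₁ : 0 < (s - 2 * π * ξ * I).re := by simpa using hs
  have hre₂ : (-s - 2 * π * ξ * I).re < 0 := by simpa using hs
  rw [Real.fourier_real_eq_integral_exp_smul, ← intervalIntegral.integral_Iic_add_Ioi
      ((integrableOn_exp_mul_complex_Iic hre₁ 0).congr_fun (fun t ht => (hle t ht).symm)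
        measurableSet_Iic)
      ((integrableOn_exp_mul_complex_Ioi hre₂ 0).congr_fun (fun t ht => (hgt t ht).symm)
        measurableSet_Ioi),
    setIntegral_congr_fun measurableSet_Iic hle, setIntegral_congr_fun measurableSet_Ioi hgt,
    integral_exp_mul_complex_Iic hre₁, integral_exp_mul_complex_Ioi hre₂]
  have h₁ : s - 2 * π * ξ * I ≠ 0 := fun h => by simp [h] at hre₁
  have h₂ : -s - 2 * π * ξ * I ≠ 0 := fun h => by simp [h] at hre₂
  have h₃ : s ^ 2 + (2 * π * ξ) ^ 2 = (s - 2 * π * ξ * I) * -(-s - 2 * π * ξ * I) := by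
    linear_combination ((2 * π * ξ) ^ 2 : ℂ) * Complex.I_sq
  rw [h₃]
  simp only [Complex.ofReal_zero, mul_zero, Complex.exp_zero]
  field_simp
  ring

lemma integral_exp_mul_I_div_sq_add_sq (hs : 0 < s.re) (a : ℝ) :
    ∫ r : ℝ, cexp (r * a * I) / ((r : ℂ) ^ 2 + s ^ 2) = π / s * cexp (-s * |a|) := by
  have hs0 : s ≠ 0 := fun h => by simp [h] at hs
  have hF : 𝓕 (fun t : ℝ => cexp (-s * |t|)) =
      fun ξ : ℝ => 2 * s * (((2 * π * ξ : ℝ) : ℂ) ^ 2 + s ^ 2)⁻¹ := by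
    ext ξ
    rw [fourier_exp_neg_mul_abs hs]
    push_cast
    ring
  have hFint : Integrable (𝓕 fun t : ℝ => cexp (-s * |t|)) := by
    rw [hF]
    exact ((integrable_inv_sq_add_sq hs).comp_mul_left' (by positivity)).const_mul _
  have hinv := (integrable_exp_neg_mul_abs hs).fourierInv_fourier_eq hFint
    (v := a) (by fun_prop)
  have hsub := Measure.integral_comp_mul_left
    (fun r : ℝ => 2 * s * (cexp (r * a * I) / ((r : ℂ) ^ 2 + s ^ 2))) (2 * π)
  have hpt : ∀ ξ : ℝ, cexp (↑(2 * π * (ξ * a)) * I) * (2 * s * (↑(2 * π * ξ) ^ 2 + s ^ 2)⁻¹)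
      = 2 * s * (cexp (↑(2 * π * ξ) * a * I) / (↑(2 * π * ξ) ^ 2 + s ^ 2)) := fun ξ => by
    push_cast
    ring_nf
  rw [Real.fourierInv_eq', hF] at hinv
  simp only [Real.inner_apply, smul_eq_mul, hpt] at hinv
  rw [hsub, integral_const_mul, abs_inv, abs_of_pos (by positivity), Complex.real_smul] at hinv
  generalize (∫ r : ℝ, cexp (r * a * I) / ((r : ℂ) ^ 2 + s ^ 2)) = J at hinv ⊢
  rw [← hinv]
  push_cast
  field_simp

lemma integral_Ioi_cos_mul_div_sq_add_sq (hs : 0 < s.re) (a : ℝ) :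
    ∫ r in Ioi 0, (cos (r * a) : ℂ) / ((r : ℂ) ^ 2 + s ^ 2) = π / (2 * s) * cexp (-s * |a|) := by
  have h := integral_exp_mul_I_div_sq_add_sq hs a
  rw [integral_eq_integral_Ioi_add_comp_neg (integrable_div_sq_add_sq_of_norm_le_one hs
    (by fun_prop) fun r => by rw [← Complex.ofReal_mul, Complex.norm_exp_ofReal_mul_I])] at h
  have hpt : ∀ r : ℝ, cexp (r * a * I) / ((r : ℂ) ^ 2 + s ^ 2)
      + cexp (↑(-r) * a * I) / (↑(-r) ^ 2 + s ^ 2)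
      = 2 * ((cos (r * a) : ℂ) / ((r : ℂ) ^ 2 + s ^ 2)) := fun r => by
    rw [mul_div_assoc', Complex.ofReal_cos, Complex.two_cos]
    push_cast
    ring_nf
  simp only [hpt, integral_const_mul] at h
  generalize (∫ r in Ioi 0, (cos (r * a) : ℂ) / ((r : ℂ) ^ 2 + s ^ 2)) = J at h ⊢
  linear_combination h / 2

lemma hasDerivAt_sin_mul_div_sq_add_sq (hs : 0 < s.re) (a r : ℝ) :
    HasDerivAt (fun r : ℝ => (sin (r * a) : ℂ) / ((r : ℂ) ^ 2 + s ^ 2))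
      (a * ((cos (r * a) : ℂ) / ((r : ℂ) ^ 2 + s ^ 2))
        - 2 * ((r : ℂ) * (sin (r * a) : ℂ) / ((r : ℂ) ^ 2 + s ^ 2) ^ 2)) r := by
  have hsin : HasDerivAt (fun r : ℝ => (sin (r * a) : ℂ)) (cos (r * a) * a : ℝ) r :=
    ((hasDerivAt_mul_const a).sin).ofReal_comp
  have hden : HasDerivAt (fun r : ℝ => (r : ℂ) ^ 2 + s ^ 2) (2 * r) r := by
    simpa using ((hasDerivAt_pow 2 (r : ℂ)).add_const (s ^ 2)).comp_ofReal
  refine (hsin.div hden (sq_add_sq_ne_zero hs r)).congr_deriv ?_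
  have := sq_add_sq_ne_zero hs r
  push_cast
  field_simp

lemma tendsto_sin_mul_div_sq_add_sq (hs : 0 < s.re) (a : ℝ) :
    Tendsto (fun r : ℝ => (sin (r * a) : ℂ) / ((r : ℂ) ^ 2 + s ^ 2)) atTop (𝓝 0) := by
  obtain ⟨c, hc, hle⟩ := exists_mul_one_add_sq_le_norm_sq_add_sq hs
  have hlim : Tendsto (fun r : ℝ => (c * (1 + r ^ 2))⁻¹) atTop (𝓝 0) :=
    (tendsto_atTop_add_const_left _ 1 (tendsto_pow_atTop two_ne_zero)).const_mul_atTop hc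
      |>.inv_tendsto_atTop
  refine squeeze_zero_norm (fun r => ?_) hlim
  rw [norm_div, Complex.norm_real, Real.norm_eq_abs, inv_eq_one_div]
  exact div_le_div₀ zero_le_one (abs_sin_le_one _) (by positivity) (hle r)

lemma two_mul_integral_Ioi_mul_sin_div_sq_add_sq_sq (hs : 0 < s.re) (a : ℝ) :
    2 * ∫ r in Ioi (0 : ℝ), (r : ℂ) * (sin (r * a) : ℂ) / ((r : ℂ) ^ 2 + s ^ 2) ^ 2
      = a * ∫ r in Ioi 0, (cos (r * a) : ℂ) / ((r : ℂ) ^ 2 + s ^ 2) := by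
  have hcos := (integrable_div_sq_add_sq_of_norm_le_one hs (f := fun r : ℝ => (cos (r * a) : ℂ))
    (by fun_prop) fun r => by
      rw [Complex.norm_real, Real.norm_eq_abs]
      exact abs_cos_le_one (r * a)).integrableOn (s := Ioi 0) |>.const_mul (a : ℂ)
  have hsin := ((integrable_mul_sin_div_sq_add_sq_sq hs a).integrableOn (s := Ioi 0)).const_mul 2
  have h := integral_Ioi_of_hasDerivAt_of_tendsto'
    (fun r _ => hasDerivAt_sin_mul_div_sq_add_sq hs a r) (hcos.sub hsin)
    (tendsto_sin_mul_div_sq_add_sq hs a)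
  rw [integral_sub hcos hsin, integral_const_mul, integral_const_mul] at h
  simp only [zero_mul, sin_zero, Complex.ofReal_zero, zero_div, sub_zero] at h
  linear_combination -h

lemma integral_Ioi_mul_sin_div_sq_add_sq_sq (hs : 0 < s.re) (a : ℝ) :
    ∫ r in Ioi (0 : ℝ), (r : ℂ) * (sin (r * a) : ℂ) / ((r : ℂ) ^ 2 + s ^ 2) ^ 2
      = π * a / (4 * s) * cexp (-s * |a|) := by
  have h := two_mul_integral_Ioi_mul_sin_div_sq_add_sq_sq hs a
  rw [integral_Ioi_cos_mul_div_sq_add_sq hs] at h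
  linear_combination h / 2

end

lemma hasDerivAt_neg_exp_neg_cpow_half_mul {z : ℂ} (hz : z ∈ slitPlane) {a : ℂ} (ha : a ≠ 0) :
    HasDerivAt (fun w : ℂ => -cexp (-(w ^ (1/2 : ℂ)) * a) / (4 * π * a))
      (cexp (-(z ^ (1/2 : ℂ)) * a) / (8 * π * z ^ (1/2 : ℂ))) z := by
  have hsqrt := (Complex.hasStrictDerivAt_cpow_const (c := 1/2) hz).hasDerivAt
  refine ((hsqrt.neg.mul_const a).cexp.neg.div_const (4 * π * a)).congr_deriv ?_
  have hs0 : z ^ (1/2 : ℂ) ≠ 0 := by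
    rw [Ne, Complex.cpow_eq_zero_iff]
    exact fun h => Complex.slitPlane_ne_zero hz h.1
  rw [show (1/2 : ℂ) - 1 = -(1/2) by norm_num, Complex.cpow_neg, Pi.neg_apply]
  field_simp
  ring

/-- For `z` off the negative real axis, with the principal branch
square root (`Re √z > 0`) and `a > 0`:
`(1/(2π²a)) ∫₀^∞ r sin(ra)/(r²+z)² dr = e^{−√z a}/(8π√z)`.
In particular `d/dz (−e^{−√z a}/(4πa)) = e^{−√z a}/(8π√z)`. -/
theorem stmt14 (z : ℂ) (hz : z ∈ Complex.slitPlane) (hre : 0 < (z ^ (1/2 : ℂ)).re)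
    (a : ℝ) (ha : 0 < a) :
    (1 / (2 * (π : ℂ) ^ 2 * (a : ℂ))) *
        (∫ r in Set.Ioi (0 : ℝ),
          ((r : ℂ) * (Real.sin (r * a) : ℂ)) / (((r : ℂ) ^ 2 + z) ^ 2))
      = Complex.exp (-(z ^ (1/2 : ℂ)) * (a : ℂ)) / (8 * (π : ℂ) * z ^ (1/2 : ℂ))
    ∧
    HasDerivAt (fun w : ℂ => -Complex.exp (-(w ^ (1/2 : ℂ)) * (a : ℂ)) / (4 * (π : ℂ) * (a : ℂ)))
      (Complex.exp (-(z ^ (1/2 : ℂ)) * (a : ℂ)) / (8 * (π : ℂ) * z ^ (1/2 : ℂ))) z := by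
  have ha0 : (a : ℂ) ≠ 0 := by exact_mod_cast ha.ne'
  refine ⟨?_, hasDerivAt_neg_exp_neg_cpow_half_mul hz ha0⟩
  have hsq : (z ^ (1/2 : ℂ)) ^ 2 = z := by rw [one_div, Complex.cpow_ofNat_inv_pow]
  have hs0 : z ^ (1/2 : ℂ) ≠ 0 := fun h => by rw [h] at hre; simp at hre
  have h := integral_Ioi_mul_sin_div_sq_add_sq_sq hre a
  rw [hsq, abs_of_pos ha] at h
  rw [h]
  field_simp
  ring
end
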